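/- For fixed a > 0, every matrix B₁ = [[-b₁, λ₁'], [λ₁, -a]] with λ₁ ∈ d_F^{-1}, b₁ ∈ Z, and ab₁ - λ₁λ₁' = m/D can be written as B₁ = g_θ B₀ (g_θ')^T for a unique θ ∈ O_F and a matrix B₀ of the same form with λ₀ ∈ d_F^{-1} representing the class of λ₁ modulo a O_F; here g_θ = [[1, θ],[0,1]]. In particular, the set of such matrices with fixed a is in bijection with {λ₀ ∈ d_F^{-1}/aO_F : λ₀λ₀' ≡ -m/D mod aZ} × O_F. -/

import Mathlib

/-!
The lower-left entry of `g_θ B₀ (g_θ')ᵀ` is `λ₀ - a θ'`, so a decomposition forces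
`λ₁ ≡ λ₀ (mod a𝒪_F)`: this pins down `λ₀ ∈ R`, and then `θ`. Conversely, for that `λ₀`,
conjugation by `g_θ` has determinant one, so comparing `ab - λλ'` on both sides determines
the upper-left entry; the upper-right entry matches because the conjugation of a quadratic
field is an involution.
-/

open Matrix

noncomputable section

/-- The inverse different, defined via the Galois conjugation `σ`:
`{x ∈ F : (xy) + (xy)' ∈ ℤ for all y ∈ 𝒪_F}`. -/
def invDiff (K : Type*) [Field K] [NumberField K] (σ : K ≃ₐ[ℚ] K) : Set K :=
  {x : K | ∀ y ∈ integralClosure ℤ K, ∃ n : ℤ, x * y + σ (x * y) = (n : K)}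

/-- `R ⊆ 𝔡_F⁻¹` is a complete set of representatives of the classes
`{λ₀ ∈ 𝔡_F⁻¹/a𝒪_F : λ₀λ₀' ≡ -m/D (mod aℤ)}`. -/
def IsRepSetσ (K : Type*) [Field K] [NumberField K] (σ : K ≃ₐ[ℚ] K)
    (D m : ℤ) (a : ℕ) (R : Finset K) : Prop :=
  (∀ lam ∈ R, lam ∈ invDiff K σ ∧ ∃ n : ℤ, lam * σ lam + (m : K) / (D : K) = (a : K) * (n : K)) ∧
  ∀ mu ∈ invDiff K σ, (∃ n : ℤ, mu * σ mu + (m : K) / (D : K) = (a : K) * (n : K)) →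
    ∃! lam, lam ∈ R ∧ ∃ θ ∈ integralClosure ℤ K, mu = lam - (a : K) * θ

/-- The matrix `B = [[-b, λ'], [λ, -a]]`. -/
def Bmat {K : Type*} [Field K] (σ : K → K) (a : ℕ) (lam : K) (b : ℤ) :
    Matrix (Fin 2) (Fin 2) K := !![-(b : K), σ lam; lam, -(a : K)]

/-- The unipotent matrix `g_θ = [[1, θ], [0, 1]]`. -/
def gmat {K : Type*} [Field K] (θ : K) : Matrix (Fin 2) (Fin 2) K := !![1, θ; 0, 1]

theorem AlgEquiv.involutive_of_finrank_eq_two {F K : Type*} [Field F] [Field K] [Algebra F K]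
    (h : Module.finrank F K = 2) (σ : K ≃ₐ[F] K) : Function.Involutive σ := by
  have : FiniteDimensional F K := .of_finrank_pos (by omega)
  have hle : orderOf σ ≤ 2 := h ▸ orderOf_le_card_univ.trans AlgEquiv.card_le
  have hdvd : orderOf σ ∣ 2 := by
    interval_cases hk : orderOf σ
    · exact absurd hk (orderOf_pos σ).ne'
    all_goals norm_num
  intro x
  simpa [pow_two] using congrArg (· x) (orderOf_dvd_iff_pow_eq_one.mp hdvd)

section
variable {K F : Type*} [Field K] [FunLike F K K] [RingHomClass F K K] (σ : F) (a : ℕ)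

theorem gmat_mul_Bmat_mul_transpose_apply_one_zero (lam θ : K) (b : ℤ) :
    (gmat θ * Bmat σ a lam b * ((gmat θ).map σ)ᵀ) 1 0 = lam - a * σ θ := by
  simp [Bmat, gmat, Matrix.mul_apply, Fin.sum_univ_two]
  ring

theorem Bmat_eq_gmat_mul_Bmat_mul_transpose (hσ : Function.Involutive σ) (ha : (a : K) ≠ 0)
    {lam₀ lam₁ θ c : K} {b₀ b₁ : ℤ} (hlam : lam₁ = lam₀ - a * σ θ)
    (h₀ : a * b₀ - lam₀ * σ lam₀ = c) (h₁ : a * b₁ - lam₁ * σ lam₁ = c) :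
    Bmat σ a lam₁ b₁ = gmat θ * Bmat σ a lam₀ b₀ * ((gmat θ).map σ)ᵀ := by
  have hσlam : σ lam₁ = σ lam₀ - a * θ := by
    rw [hlam, map_sub, map_mul, map_natCast, hσ]
  have hb : (b₁ : K) = b₀ - θ * lam₀ - σ θ * σ lam₀ + a * θ * σ θ := by
    apply mul_left_cancel₀ ha
    rw [hσlam, hlam] at h₁
    linear_combination h₁ - h₀
  ext i j
  fin_cases i <;> fin_cases j <;>
    simp [Bmat, gmat, Matrix.mul_apply, Fin.sum_univ_two, hb, hlam, hσ θ] <;> ring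
end

theorem Bmat_unique_decomposition_general (K : Type*) [Field K] [NumberField K]
    (h2 : Module.finrank ℚ K = 2) (σ : K ≃ₐ[ℚ] K)
    (D m : ℤ) (a : ℕ) (ha : 0 < a)
    (R : Finset K) (hR : IsRepSetσ K σ D m a R)
    (lam₁ : K) (b₁ : ℤ) (hlam₁ : lam₁ ∈ invDiff K σ)
    (hdet : (a : K) * (b₁ : K) - lam₁ * σ lam₁ = (m : K) / (D : K)) :
    ∃! q : K × K, (q.1 ∈ R ∧ q.2 ∈ integralClosure ℤ K) ∧
      ∃ b₀ : ℤ, (a : K) * (b₀ : K) - q.1 * σ q.1 = (m : K) / (D : K) ∧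
        Bmat (σ : K → K) a lam₁ b₁ =
          gmat q.2 * Bmat (σ : K → K) a q.1 b₀ * ((gmat q.2).map (σ : K → K))ᵀ := by
  have hσ := σ.involutive_of_finrank_eq_two h2
  have haK : (a : K) ≠ 0 := Nat.cast_ne_zero.mpr ha.ne'
  have hσO : ∀ x ∈ integralClosure ℤ K, σ x ∈ integralClosure ℤ K := fun x hx =>
    IsIntegral.map (σ : K →+* K).toIntAlgHom hx
  obtain ⟨lam₀, ⟨hlam₀R, θ₀, hθ₀, hlam₁₀⟩, huniq⟩ :=
    hR.2 lam₁ hlam₁ ⟨b₁, by linear_combination -hdet⟩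
  obtain ⟨-, b₀, hb₀⟩ := hR.1 lam₀ hlam₀R
  have hdet₀ : (a : K) * b₀ - lam₀ * σ lam₀ = m / D := by linear_combination -hb₀
  refine ⟨(lam₀, σ θ₀), ⟨⟨hlam₀R, hσO θ₀ hθ₀⟩, b₀, hdet₀,
    Bmat_eq_gmat_mul_Bmat_mul_transpose σ a hσ haK (by rw [hσ θ₀]; exact hlam₁₀) hdet₀ hdet⟩, ?_⟩
  rintro ⟨lam, θ⟩ ⟨⟨hlamR, hθ⟩, b, -, hB⟩
  have hlam : lam₁ = lam - a * σ θ := by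
    simpa [Bmat] using
      (congrFun₂ hB 1 0).trans (gmat_mul_Bmat_mul_transpose_apply_one_zero σ a lam θ b)
  obtain rfl : lam = lam₀ := huniq lam ⟨hlamR, σ θ, hσO θ hθ, hlam⟩
  obtain rfl : σ θ = θ₀ := mul_left_cancel₀ haK (by linear_combination hlam - hlam₁₀)
  simp [hσ θ]

/-- For fixed `a > 0`, every matrix `B₁ = [[-b₁, λ₁'], [λ₁, -a]]` with `λ₁ ∈ 𝔡_F⁻¹`,
`b₁ ∈ ℤ`, `ab₁ - λ₁λ₁' = m/D` can be written uniquely as `B₁ = g_θ B₀ (g_θ')ᵀ` with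
`θ ∈ 𝒪_F` and `B₀` of the same form with `λ₀` running over representatives of
`𝔡_F⁻¹/a𝒪_F` satisfying the congruence; so these matrices are in bijection with
the product of the set of classes and `𝒪_F`. -/
theorem Bmat_unique_decomposition (K : Type*) [Field K] [NumberField K]
    (h2 : Module.finrank ℚ K = 2) (σ : K ≃ₐ[ℚ] K) (hσ : σ ≠ AlgEquiv.refl)
    (D m : ℤ) (hD : D = NumberField.discr K) (a : ℕ) (ha : 0 < a)
    (R : Finset K) (hR : IsRepSetσ K σ D m a R)
    (lam₁ : K) (b₁ : ℤ) (hlam₁ : lam₁ ∈ invDiff K σ)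
    (hdet : (a : K) * (b₁ : K) - lam₁ * σ lam₁ = (m : K) / (D : K)) :
    ∃! q : K × K, (q.1 ∈ R ∧ q.2 ∈ integralClosure ℤ K) ∧
      ∃ b₀ : ℤ, (a : K) * (b₀ : K) - q.1 * σ q.1 = (m : K) / (D : K) ∧
        Bmat (σ : K → K) a lam₁ b₁ =
          gmat q.2 * Bmat (σ : K → K) a q.1 b₀ * ((gmat q.2).map (σ : K → K))ᵀ :=
  Bmat_unique_decomposition_general K h2 σ D m a ha R hR lam₁ b₁ hlam₁ hdet

end
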